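/- For integers m ≥ 0, n ≥ 1 and any parameter μ ∈ ℝ, the polynomial τ_{m,n}^{(μ)}(z) = det[(z d/dz)^{j+k} L_{m+n}^{(n+μ)}(z)]_{j,k=0}^{n−1} satisfies τ_{m,n}^{(μ)}(z) = a_{m,n} · z^{n(n−1)/2} · T_{m,n}^{(μ)}(z), where a_{m,n} = ∏_{j=1}^{n} (m+n+j+μ)^{j−1}. -/

import Mathlib

noncomputable section

open Finset

/-- Generalized binomial coefficient `C(x, k)` for real `x`. -/
def genBinom (x : ℝ) (k : ℕ) : ℝ :=
  (∏ i ∈ Finset.range k, (x - i)) / (Nat.factorial k)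

/-- Associated Laguerre polynomial `L_n^{(α)}(z)`, with the convention `L_n^{(α)} = 0` for `n < 0`. -/
def lagL (n : ℤ) (α : ℝ) : ℝ → ℝ := fun z =>
  if n < 0 then 0
  else ∑ k ∈ Finset.range (n.toNat + 1),
    (-1 : ℝ) ^ k * genBinom ((n : ℝ) + α) (n.toNat - k) * z ^ k / (Nat.factorial k)

/-- Generalised Laguerre polynomial
`T_{m,n}^{(μ)}(z) = det[(d/dz)^{j+k} L_{m+n}^{(μ+1)}(z)]_{j,k=0}^{n-1}`
(with `T_{m,0}^{(μ)} = 1`, the empty determinant). -/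
def genLag (m : ℤ) (n : ℕ) (μ : ℝ) : ℝ → ℝ := fun z =>
  Matrix.det (Matrix.of fun j k : Fin n =>
    iteratedDeriv ((j : ℕ) + (k : ℕ)) (lagL (m + n) (μ + 1)) z)

/-- Wronskian `Wr(f_1, …, f_r)(z) = det[(d/dz)^{j-1} f_k(z)]`. -/
def wronskian {r : ℕ} (f : Fin r → ℝ → ℝ) : ℝ → ℝ := fun z =>
  Matrix.det (Matrix.of fun j k : Fin r => iteratedDeriv (j : ℕ) (f k) z)

/-- The constant `c_{m,n} = (-1)^{n(2m+1+n)/2} ∏_{j=1}^n (j-1)!/(m+j)!`. -/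
def cmn (m n : ℕ) : ℝ :=
  (-1 : ℝ) ^ (n * (2 * m + 1 + n) / 2) *
    ∏ j ∈ Finset.range n, (Nat.factorial j : ℝ) / (Nat.factorial (m + j + 1))

/-- `τ_{m,n}^{(μ)}(z) = det[(z d/dz)^{j+k} L_{m+n}^{(n+μ)}(z)]_{j,k=0}^{n-1}`. -/
def tauP (m : ℤ) (n : ℕ) (μ : ℝ) : ℝ → ℝ := fun z =>
  Matrix.det (Matrix.of fun j k : Fin n =>
    ((fun (g : ℝ → ℝ) => fun t => t * deriv g t)^[(j : ℕ) + (k : ℕ)]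
      (lagL (m + n) ((n : ℝ) + μ))) z)

/-- Hirota bilinear operator `D_z(f • g) = f' g - f g'`. -/
def hirota (f g : ℝ → ℝ) (z : ℝ) : ℝ := deriv f z * g z - f z * deriv g z

/-- Probabilists' Hermite polynomial `He_n` as a real function. -/
def He (n : ℕ) : ℝ → ℝ := fun z => Polynomial.aeval z (Polynomial.hermite n)

/-- The fifth Painlevé equation (with `δ = -1/2`) for `w` with parameters `(a, b, c)`,
holding at the point `z`. -/
def PV (a b c : ℝ) (w : ℝ → ℝ) (z : ℝ) : Prop :=
  iteratedDeriv 2 w z =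
    (1 / (2 * w z) + 1 / (w z - 1)) * (deriv w z) ^ 2
      - (1 / z) * deriv w z
      + (w z - 1) ^ 2 * (a * (w z) ^ 2 + b) / (z ^ 2 * w z)
      + c * w z / z
      - w z * (w z + 1) / (2 * (w z - 1))

/-- The Jimbo–Miwa–Okamoto `σ`-equation `S_V` with parameters `(ν₁, ν₂, ν₃)`,
holding at the point `z`. -/
def SV (ν₁ ν₂ ν₃ : ℝ) (σ : ℝ → ℝ) (z : ℝ) : Prop :=
  (z * iteratedDeriv 2 σ z) ^ 2 =
    (2 * (deriv σ z) ^ 2 + (ν₁ + ν₂ + ν₃ - z) * deriv σ z + σ z) ^ 2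
      - 4 * deriv σ z * (deriv σ z + ν₁) * (deriv σ z + ν₂) * (deriv σ z + ν₃)

/-! Write `θ = z d/dz`. Expanding `θ^j = ∑_p S(j, p) z^p (d/dz)^p` with Stirling numbers of the
second kind turns `det[θ^j g_k]` into `z^(n(n-1)/2)` times the Wronskian of the `g_k`. For
`g_k = θ^k L_{m+n}^{(n+μ)}` the relation `θ L_M^{(α)} = M L_M^{(α)} - (M+α) L_{M-1}^{(α)}` makes the
`g_k` an upper triangular combination of the `L_{m+n-i}^{(n+μ)}`, `0 ≤ i < n`. On the other side,
`T_{m,n}^{(μ)}` is the Wronskian of `(d/dz)^k L_{m+n}^{(μ+1)} = (-1)^k L_{m+n-k}^{(μ+1+k)}`, and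
iterating `L_M^{(β)} = L_M^{(β+1)} - L_{M-1}^{(β+1)}` makes these a lower triangular combination of
the same polynomials. So both determinants are multiples of `Wr(L_{m+n-i}^{(n+μ)})_i`, and
`a_{m,n}` is the ratio of the two diagonals. -/

open scoped ContDiff

theorem sum_range_shift_eq {R : Type*} [CommSemiring R] {a b c w : ℕ → R} (r : ℕ) (ha : a r = 0)
    (h0 : c 0 = a 0) (hc : ∀ i, c (i + 1) = a (i + 1) + b i) :
    ∑ i ∈ range r, (a i * w i + b i * w (i + 1)) = ∑ i ∈ range (r + 1), c i * w i := by
  have hsplit : ∑ i ∈ range r, a i * w i = ∑ i ∈ range r, a (i + 1) * w (i + 1) + a 0 * w 0 := by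
    rw [← sum_range_succ' (fun i => a i * w i), sum_range_succ, ha, zero_mul, add_zero]
  simp only [sum_range_succ' (fun i => c i * w i), hc, add_mul, sum_add_distrib, hsplit, h0]
  ring

theorem sum_range_eq_sum_fin_of_le {M : Type*} [AddCommMonoid M] {r n : ℕ} (hr : r ≤ n)
    {f : ℕ → M} (hf : ∀ i, r ≤ i → f i = 0) : ∑ i ∈ range r, f i = ∑ i : Fin n, f i := by
  rw [Fin.sum_univ_eq_sum_range]
  exact sum_subset (range_subset_range.2 hr) fun i _ hi => hf i (by simpa using hi)

theorem prod_range_prod_range_eq_prod_pow {R : Type*} [CommMonoid R] (x : ℕ → R) (n : ℕ) :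
    ∏ k ∈ range n, ∏ l ∈ range k, x l = ∏ l ∈ range n, x l ^ (n - 1 - l) := by
  induction n with
  | zero => simp
  | succ n ih =>
    rw [prod_range_succ, ih, prod_range_succ _ n, Nat.add_sub_cancel, Nat.sub_self, pow_zero,
      mul_one, ← prod_mul_distrib]
    exact prod_congr rfl fun l hl => by
      rw [← pow_succ, show n - 1 - l + 1 = n - l by have := mem_range.1 hl; omega]

theorem eq_of_hasDerivAt_of_eq {f g f' : ℝ → ℝ} (hf : ∀ x, HasDerivAt f (f' x) x)
    (hg : ∀ x, HasDerivAt g (f' x) x) {x₀ : ℝ} (h : f x₀ = g x₀) : f = g :=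
  eq_of_fderiv_eq (fun x => (hf x).differentiableAt) (fun x => (hg x).differentiableAt)
    (fun x => (hf x).hasFDerivAt.fderiv.trans (hg x).hasFDerivAt.fderiv.symm) x₀ h

def eulerOp (g : ℝ → ℝ) : ℝ → ℝ := fun z => z * deriv g z

theorem eulerOp_fun_sum {ι : Type*} (s : Finset ι) (c : ι → ℝ) {f : ι → ℝ → ℝ}
    (hf : ∀ i ∈ s, Differentiable ℝ (f i)) :
    eulerOp (fun z => ∑ i ∈ s, c i * f i z) = fun z => ∑ i ∈ s, c i * eulerOp (f i) z := by
  ext z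
  rw [eulerOp, deriv_fun_sum fun i hi => ((hf i hi) z).const_mul (c i), mul_sum]
  refine sum_congr rfl fun i hi => ?_
  rw [deriv_const_mul _ ((hf i hi) z), eulerOp]
  ring

theorem eulerOp_pow_mul {f : ℝ → ℝ} (hf : Differentiable ℝ f) (p : ℕ) :
    eulerOp (fun z => z ^ p * f z) = fun z => p * (z ^ p * f z) + z ^ (p + 1) * deriv f z := by
  ext z
  rw [eulerOp, deriv_fun_mul (differentiableAt_pow p) (hf z), (hasDerivAt_pow p z).deriv]
  rcases p with _ | p
  · simp
  · push_cast
    ring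

theorem eulerOp_iterate_eq_sum_stirlingSecond {g : ℝ → ℝ} (hg : ContDiff ℝ ∞ g) (j : ℕ) :
    eulerOp^[j] g = fun z => ∑ p ∈ range (j + 1),
      (Nat.stirlingSecond j p : ℝ) * (z ^ p * iteratedDeriv p g z) := by
  induction j with
  | zero => ext z; simp
  | succ j ih =>
    have hdiff (p : ℕ) : Differentiable ℝ (iteratedDeriv p g) :=
      hg.differentiable_iteratedDeriv p (by exact_mod_cast WithTop.coe_lt_top _)
    rw [Function.iterate_succ_apply', ih,
      eulerOp_fun_sum (f := fun p z => z ^ p * iteratedDeriv p g z) _ _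
        fun p _ => (differentiable_pow p).mul (hdiff p)]
    ext z
    simp only [eulerOp_pow_mul (hdiff _), ← iteratedDeriv_succ]
    rw [← sum_range_shift_eq (a := fun p => (Nat.stirlingSecond j p : ℝ) * p)
      (b := fun p => (Nat.stirlingSecond j p : ℝ)) (j + 1) ?_ ?_ fun p => ?_]
    · exact sum_congr rfl fun p _ => by ring
    · simp [Nat.stirlingSecond_eq_zero_of_lt]
    · simp
    · push_cast [Nat.stirlingSecond_succ_succ]
      ring

theorem det_eulerOp_iterate {n : ℕ} {f : Fin n → ℝ → ℝ} (hf : ∀ k, ContDiff ℝ ∞ (f k)) (z : ℝ) :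
    (Matrix.of fun j k : Fin n => eulerOp^[j] (f k) z).det
      = z ^ (n * (n - 1) / 2) * wronskian f z := by
  have hfactor : (Matrix.of fun j k : Fin n => eulerOp^[j] (f k) z)
      = Matrix.of (fun j p : Fin n => (Nat.stirlingSecond j p : ℝ)) *
        Matrix.of fun p k : Fin n => z ^ (p : ℕ) * iteratedDeriv p (f k) z := by
    ext j k
    simp only [Matrix.of_apply, eulerOp_iterate_eq_sum_stirlingSecond (hf k), Matrix.mul_apply]
    exact sum_range_eq_sum_fin_of_le j.isLt fun p hp => by
      rw [Nat.stirlingSecond_eq_zero_of_lt hp, Nat.cast_zero, zero_mul]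
  have hstirling : (Matrix.of fun j p : Fin n => (Nat.stirlingSecond j p : ℝ)).det = 1 := by
    rw [Matrix.det_of_isLowerTriangular _ fun j p hjp => by
      rw [Matrix.of_apply, Nat.stirlingSecond_eq_zero_of_lt (show (j : ℕ) < p from hjp),
        Nat.cast_zero]]
    simp [Nat.stirlingSecond_self]
  have hpow : ∏ p : Fin n, z ^ (p : ℕ) = z ^ (n * (n - 1) / 2) := by
    rw [Fin.prod_univ_eq_prod_range (fun p => z ^ p), prod_pow_eq_pow_sum, sum_range_id]
  rw [hfactor, Matrix.det_mul, hstirling, one_mul, ← hpow]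
  exact Matrix.det_mul_column _ _

theorem wronskian_sum_mul {n : ℕ} {f : Fin n → ℝ → ℝ} (hf : ∀ i, ContDiff ℝ ∞ (f i))
    (B : Matrix (Fin n) (Fin n) ℝ) (z : ℝ) :
    wronskian (fun k x => ∑ i, B i k * f i x) z = wronskian f z * B.det := by
  rw [wronskian, wronskian, ← Matrix.det_mul]
  congr 1
  ext j k
  have hfj (i : Fin n) : ContDiffAt ℝ j (f i) z :=
    ((hf i).of_le (by exact_mod_cast le_top)).contDiffAt
  rw [Matrix.of_apply, iteratedDeriv_fun_sum fun i _ => contDiffAt_const.mul (hfj i),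
    Matrix.mul_apply]
  refine sum_congr rfl fun i _ => ?_
  rw [iteratedDeriv_const_mul _ (hfj i), Matrix.of_apply]
  ring

theorem genBinom_zero (x : ℝ) : genBinom x 0 = 1 := by simp [genBinom]

theorem succ_mul_genBinom_succ (x : ℝ) (r : ℕ) :
    ((r : ℝ) + 1) * genBinom x (r + 1) = x * genBinom (x - 1) r := by
  have hprod : ∏ i ∈ range (r + 1), (x - i) = x * ∏ i ∈ range r, (x - 1 - i) := by
    rw [prod_range_succ', mul_comm, Nat.cast_zero, sub_zero]
    exact congrArg _ (prod_congr rfl fun i _ => by push_cast; ring)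
  simp only [genBinom, hprod, Nat.factorial_succ, Nat.cast_mul]
  field_simp
  push_cast
  ring

theorem genBinom_add_one_succ (x : ℝ) (r : ℕ) :
    genBinom (x + 1) (r + 1) = genBinom x (r + 1) + genBinom x r := by
  have hprod : ∏ i ∈ range (r + 1), (x + 1 - i) = (x + 1) * ∏ i ∈ range r, (x - i) := by
    rw [prod_range_succ', mul_comm]
    simp only [Nat.cast_add, Nat.cast_one, Nat.cast_zero, sub_zero, add_sub_add_right_eq_sub]
  simp only [genBinom, hprod, prod_range_succ _ r, Nat.factorial_succ, Nat.cast_mul]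
  field_simp
  push_cast
  ring

theorem lagL_of_neg {M : ℤ} (h : M < 0) (α : ℝ) : lagL M α = 0 := by
  ext z; simp [lagL, h]

theorem lagL_natCast (M : ℕ) (α : ℝ) :
    lagL M α = fun z => ∑ k ∈ range (M + 1),
      (-1 : ℝ) ^ k * genBinom (M + α) (M - k) * z ^ k / k.factorial := by
  ext z; simp [lagL]

theorem lagL_zero (α : ℝ) : lagL 0 α = 1 := by
  ext z; simp [lagL, genBinom_zero]

theorem lagL_natCast_apply_zero (M : ℕ) (α : ℝ) : lagL M α 0 = genBinom (M + α) M := by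
  simp [lagL_natCast, sum_range_succ']

theorem contDiff_lagL (M : ℤ) (α : ℝ) : ContDiff ℝ ∞ (lagL M α) := by
  rcases lt_or_ge M 0 with h | h
  · rw [lagL_of_neg h]; exact contDiff_const
  · lift M to ℕ using h
    rw [lagL_natCast]
    fun_prop

theorem differentiable_lagL (M : ℤ) (α : ℝ) : Differentiable ℝ (lagL M α) :=
  (contDiff_lagL M α).differentiable (by simp)

theorem hasDerivAt_lagL (M : ℤ) (α z : ℝ) :
    HasDerivAt (lagL M α) (-lagL (M - 1) (α + 1) z) z := by
  rcases lt_or_ge M 0 with h | h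
  · simp only [lagL_of_neg h, lagL_of_neg (by omega : M - 1 < 0), Pi.zero_apply, neg_zero]
    exact hasDerivAt_const z (0 : ℝ)
  lift M to ℕ using h
  rcases M with _ | M
  · rw [Nat.cast_zero, lagL_zero, lagL_of_neg (by norm_num), Pi.zero_apply, neg_zero]
    exact hasDerivAt_const z 1
  rw [lagL_natCast]
  refine (HasDerivAt.fun_sum fun k _ => (((hasDerivAt_pow k z).const_mul
    ((-1 : ℝ) ^ k * genBinom ((M + 1 : ℕ) + α) (M + 1 - k)))).div_const
    (k.factorial : ℝ)).congr_deriv ?_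
  rw [show ((M + 1 : ℕ) : ℤ) - 1 = M by push_cast; ring, lagL_natCast, sum_range_succ',
    ← sum_neg_distrib]
  simp only [CharP.cast_eq_zero, zero_mul, mul_zero, zero_div, add_zero]
  refine sum_congr rfl fun k _ => ?_
  rw [Nat.factorial_succ, Nat.add_sub_add_right]
  push_cast
  field_simp
  ring_nf

theorem deriv_lagL (M : ℤ) (α : ℝ) : deriv (lagL M α) = fun z => -lagL (M - 1) (α + 1) z :=
  funext fun z => (hasDerivAt_lagL M α z).deriv

theorem iteratedDeriv_lagL (M : ℤ) (α : ℝ) (p : ℕ) :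
    iteratedDeriv p (lagL M α) = fun z => (-1 : ℝ) ^ p * lagL (M - p) (α + p) z := by
  induction p generalizing M α with
  | zero => simp
  | succ p ih =>
    rw [iteratedDeriv_succ', deriv_lagL]
    ext z
    rw [iteratedDeriv_fun_neg, ih]
    push_cast
    ring_nf

/- This identity and the next are proved by induction on `M`: the derivatives of the two sides
agree by `hasDerivAt_lagL` and the induction hypothesis at `(M - 1, α + 1)`, and their values
at `0` agree by a binomial identity. -/
theorem lagL_eq_sub (M : ℤ) (α : ℝ) :
    lagL M α = lagL M (α + 1) - lagL (M - 1) (α + 1) := by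
  rcases lt_or_ge M 0 with h | h
  · simp [lagL_of_neg h, lagL_of_neg (by omega : M - 1 < 0)]
  lift M to ℕ using h
  induction M generalizing α with
  | zero => simp [lagL_zero, lagL_of_neg]
  | succ M ih =>
    have h0 := lagL_natCast_apply_zero (M + 1)
    push_cast at h0 ⊢
    rw [add_sub_cancel_right]
    refine eq_of_hasDerivAt_of_eq (hasDerivAt_lagL _ _) (fun z => ((hasDerivAt_lagL _ _ z).sub
      (hasDerivAt_lagL _ _ z)).congr_deriv ?_) (x₀ := 0) ?_
    · rw [add_sub_cancel_right, ih (α + 1), Pi.sub_apply]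
      ring
    · rw [Pi.sub_apply, h0, h0, lagL_natCast_apply_zero,
        show (M : ℝ) + 1 + (α + 1) = M + 1 + α + 1 by ring, genBinom_add_one_succ]
      ring_nf

theorem mul_lagL_sub_one_add_one (M : ℤ) (α z : ℝ) :
    z * lagL (M - 1) (α + 1) z = (M + α) * lagL (M - 1) α z - M * lagL M α z := by
  rcases lt_or_ge M 0 with h | h
  · simp [lagL_of_neg h, lagL_of_neg (by omega : M - 1 < 0)]
  lift M to ℕ using h
  induction M generalizing α z with
  | zero => simp [lagL_of_neg]
  | succ M ih =>
    have h0 := lagL_natCast_apply_zero (M + 1)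
    push_cast at h0 ⊢
    rw [add_sub_cancel_right]
    refine congrFun (eq_of_hasDerivAt_of_eq (f := fun z => z * lagL M (α + 1) z)
      (g := fun z => (M + 1 + α) * lagL M α z - (M + 1) * lagL (M + 1) α z)
      (fun z => (hasDerivAt_id' z).mul (hasDerivAt_lagL _ _ z))
      (fun z => (((hasDerivAt_lagL _ _ z).const_mul _).sub
        ((hasDerivAt_lagL _ _ z).const_mul _)).congr_deriv ?_) (x₀ := 0) ?_) z
    · have hprev := ih (α + 1) z
      push_cast at hprev
      rw [add_sub_cancel_right]
      linear_combination hprev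
    · have habsorb := succ_mul_genBinom_succ (M + α + 1) M
      rw [add_sub_cancel_right] at habsorb
      simp only [zero_mul, h0, lagL_natCast_apply_zero, show (M : ℝ) + 1 + α = M + α + 1 by ring]
      linear_combination habsorb

theorem eulerOp_lagL (M : ℤ) (α : ℝ) :
    eulerOp (lagL M α) = fun z => M * lagL M α z - (M + α) * lagL (M - 1) α z := by
  ext z
  rw [eulerOp, deriv_lagL]
  linear_combination -mul_lagL_sub_one_add_one M α z

theorem lagL_eq_sum_choose (M : ℤ) (β : ℝ) (d : ℕ) :
    lagL M β = fun z => ∑ t ∈ range (d + 1), (-1) ^ t * d.choose t * lagL (M - t) (β + d) z := by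
  induction d with
  | zero => ext z; simp
  | succ d ih =>
    rw [ih]
    ext z
    rw [← sum_range_shift_eq (w := fun t => lagL (M - t) (β + (d + 1 : ℕ)) z)
      (a := fun t => (-1 : ℝ) ^ t * d.choose t) (b := fun t => -((-1 : ℝ) ^ t * d.choose t))
      (d + 1) (by simp) (by simp) fun t => by rw [Nat.choose_succ_succ']; push_cast; ring]
    refine sum_congr rfl fun t _ => ?_
    rw [lagL_eq_sub (M - t), Pi.sub_apply, show M - t - 1 = M - (t + 1 : ℕ) by push_cast; ring]
    push_cast
    ring_nf

def eulerCoeff (M : ℤ) (α : ℝ) : ℕ → ℕ → ℝ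
  | 0, 0 => 1
  | 0, _ + 1 => 0
  | k + 1, 0 => M * eulerCoeff M α k 0
  | k + 1, i + 1 => (M - (i + 1)) * eulerCoeff M α k (i + 1) - (M - i + α) * eulerCoeff M α k i

theorem eulerCoeff_eq_zero_of_lt (M : ℤ) (α : ℝ) : ∀ {k i : ℕ}, k < i → eulerCoeff M α k i = 0
  | 0, _ + 1, _ => rfl
  | k + 1, i + 1, h => by
    rw [eulerCoeff, eulerCoeff_eq_zero_of_lt M α (by omega : k < i + 1),
      eulerCoeff_eq_zero_of_lt M α (by omega : k < i)]
    ring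

theorem eulerCoeff_self (M : ℤ) (α : ℝ) :
    ∀ k : ℕ, eulerCoeff M α k k = (-1) ^ k * ∏ l ∈ range k, (M + α - l)
  | 0 => by simp [eulerCoeff]
  | k + 1 => by
    rw [eulerCoeff, eulerCoeff_eq_zero_of_lt M α (by omega : k < k + 1), eulerCoeff_self M α k,
      prod_range_succ]
    ring

theorem eulerOp_iterate_lagL (M : ℤ) (α : ℝ) (k : ℕ) :
    eulerOp^[k] (lagL M α)
      = fun z => ∑ i ∈ range (k + 1), eulerCoeff M α k i * lagL (M - i) α z := by
  induction k with
  | zero => ext z; simp [eulerCoeff]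
  | succ k ih =>
    rw [Function.iterate_succ_apply', ih,
      eulerOp_fun_sum _ _ fun i _ => differentiable_lagL _ _]
    ext z
    rw [← sum_range_shift_eq (w := fun i => lagL (M - i) α z)
      (a := fun i => eulerCoeff M α k i * (M - i))
      (b := fun i => -eulerCoeff M α k i * (M - i + α)) (k + 1)
      (by rw [eulerCoeff_eq_zero_of_lt M α (by omega), zero_mul])
      (by rw [eulerCoeff]; push_cast; ring) fun i => by rw [eulerCoeff]; push_cast; ring]
    refine sum_congr rfl fun i _ => ?_
    rw [eulerOp_lagL, show M - i - 1 = M - (i + 1 : ℕ) by push_cast; ring]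
    push_cast
    ring

theorem det_eulerCoeff (M : ℤ) (α : ℝ) (n : ℕ) :
    (Matrix.of fun i k : Fin n => eulerCoeff M α k i).det
      = (∏ k : Fin n, (-1 : ℝ) ^ (k : ℕ)) * ∏ l ∈ range n, (M + α - l) ^ (n - 1 - l) := by
  rw [Matrix.det_of_isUpperTriangular (M := Matrix.of fun i k : Fin n => eulerCoeff M α k i)
    fun i k hki => eulerCoeff_eq_zero_of_lt M α hki]
  simp only [Matrix.of_apply, eulerCoeff_self, prod_mul_distrib]
  rw [Fin.prod_univ_eq_prod_range (fun k => ∏ l ∈ range k, ((M : ℝ) + α - l)),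
    prod_range_prod_range_eq_prod_pow]

theorem iteratedDeriv_lagL_eq_sum_fin (N : ℤ) (μ : ℝ) {n : ℕ} (k : Fin n) :
    iteratedDeriv k (lagL N (μ + 1)) = fun z => ∑ i : Fin n,
      (if (k : ℕ) ≤ i then (-1) ^ (i : ℕ) * ((n - 1 - k).choose (i - k) : ℝ) else 0)
        * lagL (N - i) (n + μ) z := by
  ext z
  rw [iteratedDeriv_lagL, lagL_eq_sum_choose _ _ (n - 1 - k)]
  dsimp only
  rw [Fin.sum_univ_eq_sum_range
    (fun i => (if (k : ℕ) ≤ i then (-1) ^ i * ((n - 1 - k).choose (i - k) : ℝ) else 0)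
      * lagL (N - i) (n + μ) z) n, ← sum_range_add_sum_Ico _ k.isLt.le, sum_Ico_eq_sum_range,
    sum_eq_zero (s := range k) fun i hi => by rw [if_neg (by simpa using hi), zero_mul],
    zero_add, mul_sum, show n - 1 - k + 1 = n - k by omega]
  refine sum_congr rfl fun t _ => ?_
  have hβ : μ + 1 + (k : ℕ) + ((n - 1 - k : ℕ) : ℝ) = n + μ := by
    have := k.isLt
    rw [Nat.cast_sub (by omega), Nat.cast_sub (by omega)]
    push_cast
    ring
  rw [if_pos (Nat.le_add_right _ _), Nat.add_sub_cancel_left, hβ,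
    show N - (k : ℕ) - t = N - (k + t : ℕ) by push_cast; ring]
  ring

theorem tauP_eq_pow_mul_wronskian (m : ℤ) (n : ℕ) (μ z : ℝ) :
    tauP m n μ z = z ^ (n * (n - 1) / 2) *
      (wronskian (fun i : Fin n => lagL (m + n - i) (n + μ)) z
        * (Matrix.of fun i k : Fin n => eulerCoeff (m + n) (n + μ) k i).det) := by
  have hθ (k : Fin n) : eulerOp^[k] (lagL (m + n) (n + μ))
      = fun x => ∑ i : Fin n, eulerCoeff (m + n) (n + μ) k i * lagL (m + n - i) (n + μ) x := by
    rw [eulerOp_iterate_lagL]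
    ext x
    exact sum_range_eq_sum_fin_of_le k.isLt fun i hi => by
      rw [eulerCoeff_eq_zero_of_lt _ _ hi, zero_mul]
  calc tauP m n μ z
      = (Matrix.of fun j k : Fin n => eulerOp^[j] (eulerOp^[k] (lagL (m + n) (n + μ))) z).det := by
        simp only [tauP, Function.iterate_add_apply]
        rfl
    _ = z ^ (n * (n - 1) / 2) * wronskian (fun k x => ∑ i : Fin n,
          eulerCoeff (m + n) (n + μ) k i * lagL (m + n - i) (n + μ) x) z := by
        simp only [hθ]
        exact det_eulerOp_iterate (fun k => ContDiff.sum fun i _ =>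
          contDiff_const.mul (contDiff_lagL _ _)) z
    _ = _ := congrArg _ (wronskian_sum_mul (fun i => contDiff_lagL _ _) _ z)

theorem genLag_eq_wronskian_mul (m : ℤ) (n : ℕ) (μ z : ℝ) :
    genLag m n μ z = wronskian (fun i : Fin n => lagL (m + n - i) (n + μ)) z
      * ∏ k : Fin n, (-1 : ℝ) ^ (k : ℕ) := by
  set B : Matrix (Fin n) (Fin n) ℝ := .of fun i k =>
    if (k : ℕ) ≤ i then (-1) ^ (i : ℕ) * ((n - 1 - k).choose (i - k) : ℝ) else 0
  have hB : B.det = ∏ k : Fin n, (-1 : ℝ) ^ (k : ℕ) := by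
    rw [Matrix.det_of_isLowerTriangular B fun i k hik => if_neg (not_le.2 hik)]
    simp [B]
  have hD (j k : ℕ) : iteratedDeriv (j + k) (lagL (m + n) (μ + 1))
      = iteratedDeriv j (iteratedDeriv k (lagL (m + n) (μ + 1))) := by
    simp only [iteratedDeriv_eq_iterate, Function.iterate_add_apply]
  rw [← hB, ← wronskian_sum_mul fun i => contDiff_lagL _ _]
  simp only [genLag, hD, iteratedDeriv_lagL_eq_sum_fin]
  rfl

theorem tauP_eq_genLag_general (m n : ℕ) (μ : ℝ) (z : ℝ) :
    tauP (m : ℤ) n μ z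
      = (∏ j ∈ Finset.range n, ((m : ℝ) + n + (j + 1) + μ) ^ j)
          * z ^ (n * (n - 1) / 2) * genLag (m : ℤ) n μ z := by
  have hconst : ∏ l ∈ range n, (((m + n : ℤ) : ℝ) + (n + μ) - l) ^ (n - 1 - l)
      = ∏ j ∈ range n, ((m : ℝ) + n + (j + 1) + μ) ^ j := by
    rw [← prod_range_reflect]
    refine prod_congr rfl fun j hj => ?_
    have := mem_range.1 hj
    rw [show n - 1 - (n - 1 - j) = j by omega, Nat.cast_sub (by omega), Nat.cast_sub (by omega)]
    push_cast
    ring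
  rw [tauP_eq_pow_mul_wronskian, det_eulerCoeff, hconst, genLag_eq_wronskian_mul]
  ring

/-- relation between `τ_{m,n}^{(μ)}` and `T_{m,n}^{(μ)}`. -/
theorem tauP_eq_genLag (m n : ℕ) (hn : 1 ≤ n) (μ : ℝ) (z : ℝ) :
    tauP (m : ℤ) n μ z
      = (∏ j ∈ Finset.range n, ((m : ℝ) + n + (j + 1) + μ) ^ j)
          * z ^ (n * (n - 1) / 2) * genLag (m : ℤ) n μ z :=
  tauP_eq_genLag_general m n μ z
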